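/- arXiv:0904.4131 — 3 statements merged into one kernel-verified Lean document; each statement's English description precedes it below -/
import Mathlib

section
/- For every x ∈ ℝ and every c ∈ [0, 1], the function G satisfies the lower bound G(x) − G(cx) ≥ (1 − c)·|F⁻¹(cx)|·|x|. -/
open Real Filter

/-- `Fi f x = F(x) = ∫₀ˣ f(y) dy`. -/
noncomputable def Fi (f : ℝ → ℝ) (x : ℝ) : ℝ := ∫ y in (0:ℝ)..x, f y

/-- `Ft f x = F̃(x) = ∫₀ˣ y f(y) dy`. -/
noncomputable def Ft (f : ℝ → ℝ) (x : ℝ) : ℝ := ∫ y in (0:ℝ)..x, y * f y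

/-- `Gf f Finv = G = F̃ ∘ F⁻¹`. -/
noncomputable def Gf (f Finv : ℝ → ℝ) (x : ℝ) : ℝ := Ft f (Finv x)

/-!
With `a = F⁻¹(cx)` and `b = F⁻¹(x)`, `G(x) − G(cx) = ∫ₐᵇ y f(y) dy`, and since `f > 0` this is at
least `a ∫ₐᵇ f = a (x − cx)` (the integral of `(y − a) f(y)` from `a` to `b` is nonnegative whatever
the order of `a` and `b`). Finally `a` has the sign of `x`, because `F` is strictly increasing
with `F(0) = 0`, so `a (1 − c) x = (1 − c) |a| |x|`.
-/

theorem StrictMono.mul_nonneg_of_apply_eq_mul {φ : ℝ → ℝ} (hφ : StrictMono φ) (h0 : φ 0 = 0)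
    {a c x : ℝ} (hc : 0 ≤ c) (ha : φ a = c * x) : 0 ≤ a * x := by
  rcases le_total 0 x with hx | hx
  · have : 0 ≤ a := by rw [← hφ.le_iff_le, h0, ha]; exact mul_nonneg hc hx
    exact mul_nonneg this hx
  · have : a ≤ 0 := by rw [← hφ.le_iff_le, h0, ha]; exact mul_nonpos_of_nonneg_of_nonpos hc hx
    exact mul_nonneg_of_nonpos_of_nonpos this hx

theorem Fi_sub_Fi {f : ℝ → ℝ} (hf : Continuous f) (a b : ℝ) :
    Fi f b - Fi f a = ∫ y in a..b, f y :=
  intervalIntegral.integral_interval_sub_left (hf.intervalIntegrable 0 b)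
    (hf.intervalIntegrable 0 a)

theorem Fi_strictMono {f : ℝ → ℝ} (hf : Continuous f) (hfpos : ∀ x, 0 < f x) :
    StrictMono (Fi f) := fun a b hab =>
  sub_pos.mp <| Fi_sub_Fi hf a b ▸
    intervalIntegral.intervalIntegral_pos_of_pos (hf.intervalIntegrable a b) hfpos hab

theorem integral_sub_left_mul_nonneg {f : ℝ → ℝ} (hf : ∀ y, 0 ≤ f y) (a b : ℝ) :
    0 ≤ ∫ y in a..b, (y - a) * f y := by
  rcases le_total a b with hab | hba
  · exact intervalIntegral.integral_nonneg hab fun y hy => mul_nonneg (by linarith [hy.1]) (hf y)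
  · have : 0 ≤ ∫ y in b..a, (a - y) * f y :=
      intervalIntegral.integral_nonneg hba fun y hy => mul_nonneg (by linarith [hy.2]) (hf y)
    rw [intervalIntegral.integral_symm, ← intervalIntegral.integral_neg]
    simpa only [← neg_mul, neg_sub] using this

theorem mul_integral_le_integral_id_mul {f : ℝ → ℝ} (hf : Continuous f) (hf0 : ∀ y, 0 ≤ f y)
    (a b : ℝ) : a * ∫ y in a..b, f y ≤ ∫ y in a..b, y * f y := by
  have hsplit : ∫ y in a..b, y * f y = (∫ y in a..b, (y - a) * f y) + a * ∫ y in a..b, f y := by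
    rw [← intervalIntegral.integral_const_mul,
      ← intervalIntegral.integral_add (Continuous.intervalIntegrable (by fun_prop) _ _)
        (Continuous.intervalIntegrable (by fun_prop) _ _)]
    congr 1 with y
    ring
  linarith [integral_sub_left_mul_nonneg hf0 a b]

theorem G_increment_lower_bound_general
    (f Finv : ℝ → ℝ) (hf : Continuous f) (hfpos : ∀ x, 0 < f x)
    (hFinv₁ : ∀ x, Fi f (Finv x) = x) :
    ∀ (x : ℝ) (c : ℝ), c ∈ Set.Icc (0:ℝ) 1 →
      (1 - c) * |Finv (c * x)| * |x| ≤ Gf f Finv x - Gf f Finv (c * x) := by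
  rintro x c ⟨hc0, -⟩
  set a := Finv (c * x)
  set b := Finv x
  have hax : 0 ≤ a * x :=
    (Fi_strictMono hf hfpos).mul_nonneg_of_apply_eq_mul intervalIntegral.integral_same hc0
      (hFinv₁ _)
  calc (1 - c) * |a| * |x| = a * (Fi f b - Fi f a) := by
        rw [mul_assoc, ← abs_mul, abs_of_nonneg hax, hFinv₁, hFinv₁]; ring
    _ = a * ∫ y in a..b, f y := by rw [Fi_sub_Fi hf]
    _ ≤ ∫ y in a..b, y * f y := mul_integral_le_integral_id_mul hf (fun y => (hfpos y).le) a b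
    _ = Gf f Finv x - Gf f Finv (c * x) := (Fi_sub_Fi (by fun_prop) a b).symm

/-- For every `x ∈ ℝ` and `c ∈ [0,1]`: `G(x) − G(cx) ≥ (1 − c)·|F⁻¹(cx)|·|x|`. -/
theorem G_increment_lower_bound
    (f Finv : ℝ → ℝ) (hf : Continuous f) (hfpos : ∀ x, 0 < f x)
    (htop : Tendsto (Fi f) atTop atTop) (hbot : Tendsto (Fi f) atBot atBot)
    (hFinv₁ : ∀ x, Fi f (Finv x) = x) (hFinv₂ : ∀ x, Finv (Fi f x) = x) :
    ∀ (x : ℝ) (c : ℝ), c ∈ Set.Icc (0:ℝ) 1 →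
      (1 - c) * |Finv (c * x)| * |x| ≤ Gf f Finv x - Gf f Finv (c * x) :=
  G_increment_lower_bound_general f Finv hf hfpos hFinv₁
end

section
/- Recursion for the partial derivatives of the Version 1 cost: for all x ∈ ℝ^{N+1} and all n ∈ {0,…,N−1}, the partial derivatives of C⁽¹⁾ satisfy ∂C⁽¹⁾/∂xₙ (x) = F⁻¹(Eₙ⁺) + ā(Eₙ⁺)·(1 − τρ̄′(Eₙ⁺)Eₙ⁺)·[∂C⁽¹⁾/∂x_{n+1}(x) − F⁻¹(E_{n+1})], where Eₙ⁺ and E_{n+1} are evaluated along the dynamics determined by x. -/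
open Real Filter Finset

/-- `ab τ ρ x = ā(x) = exp(−τ ρ̄(x))`. -/
noncomputable def ab (τ : ℝ) (ρ : ℝ → ℝ) (x : ℝ) : ℝ := Real.exp (-(τ * ρ x))

/-- Version 1 dynamics: `E₀ = 0`, `E_{n+1} = ā(Eₙ + xₙ)·(Eₙ + xₙ)`. -/
noncomputable def Ev (τ : ℝ) (ρ : ℝ → ℝ) (x : ℕ → ℝ) : ℕ → ℝ
  | 0 => 0
  | n + 1 => ab τ ρ (Ev τ ρ x n + x n) * (Ev τ ρ x n + x n)

/-- Version 1 cost functional `C⁽¹⁾`. -/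
noncomputable def C1 (f Finv : ℝ → ℝ) (τ : ℝ) (ρ : ℝ → ℝ) (N : ℕ) (x : ℕ → ℝ) : ℝ :=
  ∑ n ∈ Finset.range (N + 1), (Gf f Finv (Ev τ ρ x n + x n) - Gf f Finv (Ev τ ρ x n))

/-!
Differentiating `G(E_k + x_k) - G(E_k)` and using `G' = F⁻¹`, the derivative of `C⁽¹⁾` in `x_n` is
`F⁻¹(E_n⁺) + ∑_{k > n} (F⁻¹(E_k⁺) - F⁻¹(E_k)) ∂E_k/∂x_n`, and by the chain rule along the dynamics
`∂E_k/∂x_n` is the product of the step derivatives `(ā(s) s)'` at `E_n⁺, …, E_{k-1}⁺`.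
Factoring the first step derivative out of the sum over `k > n` leaves the same sum for `n + 1`,
which is `∂C⁽¹⁾/∂x_{n+1} - F⁻¹(E_{n+1})`.
-/

open Function

section Primitive

variable {f Finv : ℝ → ℝ}

theorem hasDerivAt_Fi (hf : Continuous f) (y : ℝ) : HasDerivAt (Fi f) (f y) y :=
  (hf.integral_hasStrictDerivAt 0 y).hasDerivAt

theorem hasDerivAt_Ft (hf : Continuous f) (y : ℝ) : HasDerivAt (Ft f) (y * f y) y :=
  ((continuous_id.mul hf).integral_hasStrictDerivAt 0 y).hasDerivAt

theorem continuous_inverse_Fi (hf : Continuous f) (hfpos : ∀ x, 0 < f x)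
    (hFinv₁ : ∀ x, Fi f (Finv x) = x) (hFinv₂ : ∀ x, Finv (Fi f x) = x) : Continuous Finv := by
  have hmono : StrictMono (Fi f) := strictMono_of_hasDerivAt_pos (hasDerivAt_Fi hf) hfpos
  refine Monotone.continuous_of_surjective (fun a b hab => ?_) fun y => ⟨Fi f y, hFinv₂ y⟩
  rwa [← hmono.le_iff_le, hFinv₁, hFinv₁]

theorem hasDerivAt_inverse_Fi (hf : Continuous f) (hfpos : ∀ x, 0 < f x)
    (hFinv₁ : ∀ x, Fi f (Finv x) = x) (hFinv₂ : ∀ x, Finv (Fi f x) = x) (s : ℝ) :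
    HasDerivAt Finv (f (Finv s))⁻¹ s :=
  .of_local_left_inverse (continuous_inverse_Fi hf hfpos hFinv₁ hFinv₂).continuousAt
    (hasDerivAt_Fi hf (Finv s)) (hfpos _).ne' (.of_forall hFinv₁)

theorem hasDerivAt_Gf (hf : Continuous f) (hfpos : ∀ x, 0 < f x)
    (hFinv₁ : ∀ x, Fi f (Finv x) = x) (hFinv₂ : ∀ x, Finv (Fi f x) = x) (s : ℝ) :
    HasDerivAt (Gf f Finv) (Finv s) s := by
  have h := (hasDerivAt_Ft hf (Finv s)).comp s (hasDerivAt_inverse_Fi hf hfpos hFinv₁ hFinv₂ s)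
  rwa [mul_inv_cancel_right₀ (hfpos _).ne'] at h

end Primitive

section Dynamics

variable {τ : ℝ} {ρ : ℝ → ℝ}

/-- The derivative of the step map `s ↦ ā(s) s`. -/
noncomputable def stepDeriv (τ : ℝ) (ρ : ℝ → ℝ) (s : ℝ) : ℝ :=
  ab τ ρ s * (1 - τ * deriv ρ s * s)

/-- `∂E_k/∂x_n` for `n < k`. -/
noncomputable def sensitivity (τ : ℝ) (ρ : ℝ → ℝ) (x : ℕ → ℝ) (n k : ℕ) : ℝ :=
  ∏ i ∈ Ico n k, stepDeriv τ ρ (Ev τ ρ x i + x i)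

theorem sensitivity_self (x : ℕ → ℝ) (n : ℕ) : sensitivity τ ρ x n n = 1 := by
  rw [sensitivity, Ico_self, prod_empty]

theorem sensitivity_eq_stepDeriv_mul (x : ℕ → ℝ) {n k : ℕ} (h : n < k) :
    sensitivity τ ρ x n k = stepDeriv τ ρ (Ev τ ρ x n + x n) * sensitivity τ ρ x (n + 1) k :=
  prod_eq_prod_Ico_succ_bot h _

theorem hasDerivAt_ab_mul (hρ : Differentiable ℝ ρ) (s : ℝ) :
    HasDerivAt (fun s => ab τ ρ s * s) (stepDeriv τ ρ s) s := by
  have hab : HasDerivAt (ab τ ρ) (ab τ ρ s * -(τ * deriv ρ s)) s :=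
    (((hρ s).hasDerivAt.const_mul τ).neg).exp
  exact (hab.fun_mul (hasDerivAt_id' s)).congr_deriv (by rw [stepDeriv]; ring)

theorem Ev_update_of_le (x : ℕ → ℝ) {n j : ℕ} (h : j ≤ n) (t : ℝ) :
    Ev τ ρ (update x n t) j = Ev τ ρ x j := by
  induction j with
  | zero => rfl
  | succ j ih => simp only [Ev, ih (by omega), update_of_ne (by omega : j ≠ n)]

theorem hasDerivAt_Ev_update (hρ : Differentiable ℝ ρ) (x : ℕ → ℝ) {n k : ℕ} (hk : n < k) :
    HasDerivAt (fun t => Ev τ ρ (update x n t) k) (sensitivity τ ρ x n k) (x n) := by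
  induction k, hk using Nat.le_induction with
  | base =>
    have hfun : (fun t => Ev τ ρ (update x n t) (n + 1)) =
        fun t => ab τ ρ (Ev τ ρ x n + t) * (Ev τ ρ x n + t) := by
      funext t
      simp only [Ev, Ev_update_of_le x le_rfl, update_self]
    rw [hfun, sensitivity_eq_stepDeriv_mul x n.lt_succ_self, sensitivity_self, mul_one]
    exact (hasDerivAt_ab_mul hρ _).comp_const_add _ _
  | succ k hk ih =>
    have hfun : (fun t => Ev τ ρ (update x n t) (k + 1)) =
        (fun s => ab τ ρ s * s) ∘ fun t => Ev τ ρ (update x n t) k + x k := by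
      funext t
      simp only [Ev, update_of_ne (by omega : k ≠ n), comp_apply]
    rw [hfun, sensitivity, prod_Ico_succ_top (by omega), mul_comm]
    exact (hasDerivAt_ab_mul hρ _).comp_of_eq (x n) (ih.add_const (x k))
      (by simp only [update_eq_self])

end Dynamics

section Cost

variable {f Finv : ℝ → ℝ} {τ : ℝ} {ρ : ℝ → ℝ}

theorem hasDerivAt_C1_update (hρ : Differentiable ℝ ρ)
    (hG : ∀ s, HasDerivAt (Gf f Finv) (Finv s) s) (N : ℕ) (x : ℕ → ℝ) {n : ℕ} (hn : n ≤ N) :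
    HasDerivAt (fun t => C1 f Finv τ ρ N (update x n t))
      (Finv (Ev τ ρ x n + x n) + ∑ k ∈ Ico (n + 1) (N + 1),
        (Finv (Ev τ ρ x k + x k) - Finv (Ev τ ρ x k)) * sensitivity τ ρ x n k) (x n) := by
  set term : (ℕ → ℝ) → ℕ → ℝ := fun y k => Gf f Finv (Ev τ ρ y k + y k) - Gf f Finv (Ev τ ρ y k)
  have hsplit : ∀ y, C1 f Finv τ ρ N y =
      ∑ k ∈ range n, term y k + (term y n + ∑ k ∈ Ico (n + 1) (N + 1), term y k) := fun y => by
    rw [← sum_eq_sum_Ico_succ_bot (by omega), sum_range_add_sum_Ico _ (by omega)]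
    rfl
  have hbefore : ∀ t, ∑ k ∈ range n, term (update x n t) k = ∑ k ∈ range n, term x k :=
    fun t => sum_congr rfl fun k hk => by
      have hkn : k < n := mem_range.mp hk
      simp only [term, Ev_update_of_le x hkn.le, update_of_ne hkn.ne]
  have hat : HasDerivAt (fun t => term (update x n t) n) (Finv (Ev τ ρ x n + x n)) (x n) := by
    have hfun : (fun t => term (update x n t) n) =
        fun t => Gf f Finv (Ev τ ρ x n + t) - Gf f Finv (Ev τ ρ x n) := by
      funext t
      simp only [term, Ev_update_of_le x le_rfl, update_self]
    rw [hfun]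
    exact ((hG _).comp_const_add _ _).sub_const _
  have hafter : ∀ k ∈ Ico (n + 1) (N + 1), HasDerivAt (fun t => term (update x n t) k)
      ((Finv (Ev τ ρ x k + x k) - Finv (Ev τ ρ x k)) * sensitivity τ ρ x n k) (x n) := by
    intro k hk
    have hnk : n < k := (mem_Ico.mp hk).1
    have hfun : (fun t => term (update x n t) k) = fun t =>
        Gf f Finv (Ev τ ρ (update x n t) k + x k) - Gf f Finv (Ev τ ρ (update x n t) k) := by
      funext t
      simp only [term, update_of_ne hnk.ne']
    have hE := hasDerivAt_Ev_update (τ := τ) hρ x hnk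
    rw [hfun, sub_mul]
    exact ((hG _).comp_of_eq (x n) (hE.add_const (x k)) (by simp only [update_eq_self])).sub
      ((hG _).comp_of_eq (x n) hE (by simp only [update_eq_self]))
  simp only [hsplit, hbefore]
  exact (hat.add (HasDerivAt.fun_sum hafter)).const_add _

end Cost

theorem C1_partial_deriv_recursion_general
    (f Finv : ℝ → ℝ) (hf : Continuous f) (hfpos : ∀ x, 0 < f x)
    (hFinv₁ : ∀ x, Fi f (Finv x) = x) (hFinv₂ : ∀ x, Finv (Fi f x) = x)
    (τ : ℝ) (ρ : ℝ → ℝ) (hρ : ContDiff ℝ 2 ρ)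
    (N : ℕ) :
    ∀ (x : ℕ → ℝ) (n : ℕ), n < N →
      deriv (fun t : ℝ => C1 f Finv τ ρ N (Function.update x n t)) (x n) =
        Finv (Ev τ ρ x n + x n) +
          ab τ ρ (Ev τ ρ x n + x n) *
            (1 - τ * deriv ρ (Ev τ ρ x n + x n) * (Ev τ ρ x n + x n)) *
            (deriv (fun t : ℝ => C1 f Finv τ ρ N (Function.update x (n + 1) t)) (x (n + 1)) -
              Finv (Ev τ ρ x (n + 1))) := by
  intro x n hn
  have hρ' : Differentiable ℝ ρ := hρ.differentiable (by norm_num)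
  have hG := hasDerivAt_Gf hf hfpos hFinv₁ hFinv₂
  rw [(hasDerivAt_C1_update hρ' hG N x hn.le).deriv,
    (hasDerivAt_C1_update hρ' hG N x (n := n + 1) hn).deriv,
    sum_congr rfl fun k hk => by
      rw [sensitivity_eq_stepDeriv_mul x (mem_Ico.mp hk).1, mul_left_comm],
    ← mul_sum, sum_eq_sum_Ico_succ_bot (by omega), sensitivity_self, mul_one, stepDeriv]
  ring

/-- Recursion for the partial derivatives of the Version 1 cost:
`∂C⁽¹⁾/∂xₙ = F⁻¹(Eₙ⁺) + ā(Eₙ⁺)(1 − τρ̄′(Eₙ⁺)Eₙ⁺)[∂C⁽¹⁾/∂x_{n+1} − F⁻¹(E_{n+1})]`. -/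
theorem C1_partial_deriv_recursion
    (f Finv : ℝ → ℝ) (hf : Continuous f) (hfpos : ∀ x, 0 < f x)
    (htop : Tendsto (Fi f) atTop atTop) (hbot : Tendsto (Fi f) atBot atBot)
    (hFinv₁ : ∀ x, Fi f (Finv x) = x) (hFinv₂ : ∀ x, Finv (Fi f x) = x)
    (τ : ℝ) (hτ : 0 < τ) (ρ : ℝ → ℝ) (hρ : ContDiff ℝ 2 ρ)
    (N : ℕ) (hN : 1 ≤ N) :
    ∀ (x : ℕ → ℝ) (n : ℕ), n < N →
      deriv (fun t : ℝ => C1 f Finv τ ρ N (Function.update x n t)) (x n) =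
        Finv (Ev τ ρ x n + x n) +
          ab τ ρ (Ev τ ρ x n + x n) *
            (1 - τ * deriv ρ (Ev τ ρ x n + x n) * (Ev τ ρ x n + x n)) *
            (deriv (fun t : ℝ => C1 f Finv τ ρ N (Function.update x (n + 1) t)) (x (n + 1)) -
              Finv (Ev τ ρ x (n + 1))) :=
  C1_partial_deriv_recursion_general f Finv hf hfpos hFinv₁ hFinv₂ τ ρ hρ N
end

section
/- Positivity of the denominator of h₂ (part of Lemma on ĥ₂): assume 1 − τρ̄′(x)x > 0 for all x ∈ ℝ and that the function h₂(x) := x·k₂(x)/k(x) is one-to-one, where k(x) := f(x) − ā(x)·f(ā(x)x)·(1 − τρ̄′(x)x) and k₂(x) := f(x) − ā(x)²·f(ā(x)x)·(1 − τρ̄′(x)x). Then k(x) > 0 (and hence also k₂(x) > 0) for all x ∈ ℝ. -/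
open Real

/-- `k(x) = f(x) − ā(x)f(ā(x)x)(1 − τρ̄′(x)x)`, the denominator of `h₂`. -/
noncomputable def kden (f : ℝ → ℝ) (τ : ℝ) (ρ : ℝ → ℝ) (x : ℝ) : ℝ :=
  f x - ab τ ρ x * f (ab τ ρ x * x) * (1 - τ * deriv ρ x * x)

/-- `k₂(x) = f(x) − ā(x)²f(ā(x)x)(1 − τρ̄′(x)x)`, the numerator of `h₂`. -/
noncomputable def k2num (f : ℝ → ℝ) (τ : ℝ) (ρ : ℝ → ℝ) (x : ℝ) : ℝ :=
  f x - (ab τ ρ x) ^ 2 * f (ab τ ρ x * x) * (1 - τ * deriv ρ x * x)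

/-!
Since `ā < 1` we have `k(0) = (1 − ā(0)) f(0) > 0`. If `k(x) = 0` then `h₂(x) = 0 = h₂(0)`
(division by zero gives `0`), so injectivity forces `x = 0`, which is impossible; thus the
continuous function `k` never vanishes and, by the intermediate value theorem, stays positive.
Finally `k₂ − k = ā(1 − ā) f(āx)(1 − τρ̄′x) > 0`.
-/

theorem Continuous.pos_of_forall_ne_zero {X α : Type*} [TopologicalSpace X] [PreconnectedSpace X]
    [LinearOrder α] [Zero α] [TopologicalSpace α] [OrderClosedTopology α] {f : X → α}
    (hf : Continuous f) (hne : ∀ x, f x ≠ 0) {a : X} (ha : 0 < f a) (x : X) : 0 < f x := by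
  by_contra! hx
  obtain ⟨y, hy⟩ := intermediate_value_univ x a hf ⟨hx, ha.le⟩
  exact hne y hy

theorem Function.Injective.eq_zero_of_denominator_eq_zero {K : Type*} [DivisionRing K]
    {n d : K → K} (h : Function.Injective fun x => x * (n x / d x)) {x : K} (hx : d x = 0) :
    x = 0 :=
  h (by simp [hx])

section

variable {τ : ℝ} {ρ : ℝ → ℝ}

theorem ab_pos (x : ℝ) : 0 < ab τ ρ x := exp_pos _

theorem ab_lt_one (hτ : 0 < τ) {x : ℝ} (hρx : 0 < ρ x) : ab τ ρ x < 1 :=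
  exp_lt_one_iff.mpr (neg_neg_of_pos (mul_pos hτ hρx))

theorem continuous_ab (hρ : Continuous ρ) : Continuous (ab τ ρ) := by
  unfold ab
  fun_prop

theorem continuous_kden {f : ℝ → ℝ} (hf : Continuous f) (hρ : ContDiff ℝ 1 ρ) :
    Continuous (kden f τ ρ) := by
  have hab := continuous_ab (τ := τ) hρ.continuous
  have hρ' := hρ.continuous_deriv le_rfl
  unfold kden
  fun_prop

theorem kden_zero {f : ℝ → ℝ} : kden f τ ρ 0 = (1 - ab τ ρ 0) * f 0 := by
  simp only [kden, mul_zero, sub_zero, mul_one]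
  ring

theorem k2num_sub_kden (f : ℝ → ℝ) (x : ℝ) :
    k2num f τ ρ x - kden f τ ρ x =
      ab τ ρ x * (1 - ab τ ρ x) * (f (ab τ ρ x * x) * (1 - τ * deriv ρ x * x)) := by
  unfold k2num kden
  ring

end

/-- Positivity of the denominator (and numerator) of `h₂`: if `1 − τρ̄′(x)x > 0` for all `x`
and `h₂(x) = x·k₂(x)/k(x)` is one-to-one, then `k(x) > 0` and `k₂(x) > 0` for all `x`. -/
theorem h2_denominator_positive
    (f : ℝ → ℝ) (hf : Continuous f) (hfpos : ∀ x, 0 < f x)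
    (τ : ℝ) (hτ : 0 < τ) (ρ : ℝ → ℝ) (hρ : ContDiff ℝ 1 ρ) (hρpos : ∀ x, 0 < ρ x)
    (hρ' : ∀ x, 0 < 1 - τ * deriv ρ x * x)
    (hh2 : Function.Injective (fun x : ℝ => x * (k2num f τ ρ x / kden f τ ρ x))) :
    ∀ x : ℝ, 0 < kden f τ ρ x ∧ 0 < k2num f τ ρ x := by
  have hab_lt_one : ∀ x, ab τ ρ x < 1 := fun x => ab_lt_one hτ (hρpos x)
  have hk0 : 0 < kden f τ ρ 0 := by
    rw [kden_zero]
    exact mul_pos (sub_pos.mpr (hab_lt_one 0)) (hfpos 0)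
  have hk_ne : ∀ x, kden f τ ρ x ≠ 0 := fun x hx =>
    hk0.ne' (hh2.eq_zero_of_denominator_eq_zero hx ▸ hx)
  have hk_pos := (continuous_kden hf hρ).pos_of_forall_ne_zero hk_ne hk0
  intro x
  have hk2_sub_k : 0 < k2num f τ ρ x - kden f τ ρ x := by
    rw [k2num_sub_kden]
    exact mul_pos (mul_pos (ab_pos x) (sub_pos.mpr (hab_lt_one x))) (mul_pos (hfpos _) (hρ' x))
  exact ⟨hk_pos x, by linarith [hk_pos x]⟩
end
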